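/- arXiv:2303.11503 — 3 statements merged into one kernel-verified Lean document; each statement's English description precedes it below -/
import Mathlib

section
/- If G is a connected graph on n vertices with maximum degree Δ ≥ 1, then μ₁(G) = Δ + 1 if and only if Δ = n − 1. -/
open Matrix

/-- Sorted (nonincreasing) list of eigenvalues of a matrix, empty if not Hermitian. -/
noncomputable def heigList {𝕜 : Type} [RCLike 𝕜] {m : Type} [Fintype m] [DecidableEq m]
    (M : Matrix m m 𝕜) : List ℝ :=
  if h : M.IsHermitian then (Finset.univ.val.map h.eigenvalues).sort (· ≥ ·) else []

/-- `kthEig M k` is the k-th largest eigenvalue of `M` (1-indexed). -/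
noncomputable def kthEig {𝕜 : Type} [RCLike 𝕜] {m : Type} [Fintype m] [DecidableEq m]
    (M : Matrix m m 𝕜) (k : ℕ) : ℝ :=
  (heigList M).getD (k - 1) 0

/-- Laplacian matrix of a simple graph on a finite vertex type, over ℝ. -/
noncomputable def lapMat {V : Type} [Fintype V] [DecidableEq V] (G : SimpleGraph V) :
    Matrix V V ℝ :=
  letI := Classical.decRel G.Adj
  G.lapMatrix ℝ

/-- `lapμ G k` is the k-th largest Laplacian eigenvalue of `G` (1-indexed). -/
noncomputable def lapμ {V : Type} [Fintype V] [DecidableEq V] (G : SimpleGraph V) (k : ℕ) : ℝ :=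
  kthEig (lapMat G) k

/-- Number of Laplacian eigenvalues of `G` in the closed interval `[a, b]`, with multiplicity. -/
noncomputable def mIcc {V : Type} [Fintype V] [DecidableEq V] (G : SimpleGraph V) (a b : ℝ) : ℕ :=
  ((heigList (lapMat G)).filter (fun x => a ≤ x ∧ x ≤ b)).length

/-!
Always `μ₁ ≤ n`, since the Laplacian form of `G` is dominated by that of `Kₙ`; and always
`μ₁ ≥ Δ + 1`, by testing the Rayleigh quotient on the vector `x` equal to `Δ` at a vertex `v`
of maximum degree, `-1` on its neighbours and `0` elsewhere. So `Δ = n - 1` forces `μ₁ = Δ + 1`.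
Conversely, if `Δ < n - 1`, connectivity gives a vertex `w` at distance two from `v`. Were
`μ₁ = Δ + 1`, the vector `x` would attain the top of the Rayleigh quotient and hence be an
eigenvector, but `(L x)(w)` is the number of common neighbours of `v` and `w`, while `x(w) = 0`.
-/

open scoped MatrixOrder

namespace Matrix.IsHermitian

variable {m : Type} [Fintype m] [DecidableEq m] {M : Matrix m m ℝ}

theorem mem_heigList_iff (hM : M.IsHermitian) {a : ℝ} :
    a ∈ heigList M ↔ ∃ i, hM.eigenvalues i = a := by
  simp only [heigList, dif_pos hM, Multiset.mem_sort, Multiset.mem_map, Finset.mem_univ_val,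
    true_and]

theorem kthEig_one_mem_heigList [Nonempty m] (hM : M.IsHermitian) :
    kthEig M 1 ∈ heigList M := by
  obtain ⟨i⟩ := ‹Nonempty m›
  obtain ⟨b, t, hbt⟩ := List.exists_cons_of_ne_nil
    (List.ne_nil_of_mem ((hM.mem_heigList_iff).2 ⟨i, rfl⟩))
  simp [kthEig, hbt]

theorem le_kthEig_one_of_mem_heigList {a : ℝ} (ha : a ∈ heigList M) : a ≤ kthEig M 1 := by
  have hsorted : (heigList M).Pairwise (· ≥ ·) := by
    unfold heigList
    split_ifs
    exacts [Multiset.pairwise_sort _ _, .nil]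
  obtain ⟨b, t, hbt⟩ := List.exists_cons_of_ne_nil (List.ne_nil_of_mem ha)
  rw [hbt, List.pairwise_cons] at hsorted
  rw [hbt, List.mem_cons] at ha
  rcases ha with rfl | ha
  · simp [kthEig, hbt]
  · simpa [kthEig, hbt] using hsorted.1 a ha

theorem eigenvalues_le_kthEig_one (hM : M.IsHermitian) (i : m) : hM.eigenvalues i ≤ kthEig M 1 :=
  le_kthEig_one_of_mem_heigList ((hM.mem_heigList_iff).2 ⟨i, rfl⟩)

theorem posSemidef_kthEig_one_smul_one_sub (hM : M.IsHermitian) :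
    (kthEig M 1 • (1 : Matrix m m ℝ) - M).PosSemidef := by
  have hle : M ≤ algebraMap ℝ (Matrix m m ℝ) (kthEig M 1) := by
    refine le_algebraMap_of_spectrum_le fun x hx => ?_
    rw [hM.spectrum_real_eq_range_eigenvalues] at hx
    obtain ⟨i, rfl⟩ := hx
    exact hM.eigenvalues_le_kthEig_one i
  simpa [Matrix.le_iff, Algebra.algebraMap_eq_smul_one] using hle

theorem dotProduct_mulVec_le_kthEig_one (hM : M.IsHermitian) (x : m → ℝ) :
    x ⬝ᵥ M *ᵥ x ≤ kthEig M 1 * (x ⬝ᵥ x) := by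
  have h := hM.posSemidef_kthEig_one_smul_one_sub.dotProduct_mulVec_nonneg x
  simp only [star_trivial, sub_mulVec, smul_mulVec, one_mulVec, dotProduct_sub,
    dotProduct_smul, smul_eq_mul] at h
  linarith

theorem kthEig_one_le_of_forall_dotProduct_mulVec_le [Nonempty m] (hM : M.IsHermitian) {c : ℝ}
    (h : ∀ x : m → ℝ, x ⬝ᵥ M *ᵥ x ≤ c * (x ⬝ᵥ x)) : kthEig M 1 ≤ c := by
  obtain ⟨i, hi⟩ := (hM.mem_heigList_iff).1 hM.kthEig_one_mem_heigList
  set u : m → ℝ := ⇑(hM.eigenvectorBasis i)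
  have hu : u ≠ 0 := fun h0 =>
    hM.eigenvectorBasis.orthonormal.ne_zero i (by ext j; exact congrFun h0 j)
  have hpos : 0 < u ⬝ᵥ u := by simpa using dotProduct_self_star_pos_iff.2 hu
  have hcu := h u
  rw [hM.mulVec_eigenvectorBasis i, dotProduct_smul, smul_eq_mul, hi] at hcu
  exact le_of_mul_le_mul_right hcu hpos

theorem mulVec_eq_kthEig_one_smul_of_le (hM : M.IsHermitian) {x : m → ℝ}
    (h : kthEig M 1 * (x ⬝ᵥ x) ≤ x ⬝ᵥ M *ᵥ x) : M *ᵥ x = kthEig M 1 • x := by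
  have hpsd := hM.posSemidef_kthEig_one_smul_one_sub
  have hzero : star x ⬝ᵥ (kthEig M 1 • (1 : Matrix m m ℝ) - M) *ᵥ x = 0 := by
    have := hpsd.dotProduct_mulVec_nonneg x
    simp only [star_trivial, sub_mulVec, smul_mulVec, one_mulVec, dotProduct_sub,
      dotProduct_smul, smul_eq_mul] at this ⊢
    linarith
  have := (hpsd.dotProduct_mulVec_zero_iff x).1 hzero
  rw [sub_mulVec, smul_mulVec, one_mulVec, sub_eq_zero] at this
  exact this.symm

end Matrix.IsHermitian

theorem Finset.sum_row_add_sum_col_le_sum_sum {ι : Type} [Fintype ι] [DecidableEq ι]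
    {F : ι → ι → ℝ} (hF : ∀ i j, 0 ≤ F i j) (k : ι) (hk : F k k = 0) :
    ∑ j, F k j + ∑ i, F i k ≤ ∑ i, ∑ j, F i j := by
  calc ∑ j, F k j + ∑ i, F i k = ∑ j, F k j + ∑ i ∈ Finset.univ.erase k, F i k := by
        rw [← Finset.add_sum_erase _ (fun i => F i k) (Finset.mem_univ k), hk, zero_add]
    _ ≤ ∑ j, F k j + ∑ i ∈ Finset.univ.erase k, ∑ j, F i j := by
        gcongr with i
        exact Finset.single_le_sum (fun j _ => hF i j) (Finset.mem_univ k)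
    _ = ∑ i, ∑ j, F i j := Finset.add_sum_erase _ (fun i => ∑ j, F i j) (Finset.mem_univ k)

namespace SimpleGraph

variable {V : Type} [Fintype V] [DecidableEq V] (G : SimpleGraph V) [DecidableRel G.Adj]

theorem lapμ_eq_kthEig_lapMatrix (k : ℕ) : lapμ G k = kthEig (G.lapMatrix ℝ) k := by
  unfold lapμ lapMat
  congr!

theorem dotProduct_lapMatrix_mulVec (x : V → ℝ) :
    x ⬝ᵥ G.lapMatrix ℝ *ᵥ x = (∑ i, ∑ j, if G.Adj i j then (x i - x j) ^ 2 else 0) / 2 := by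
  rw [← toLinearMap₂'_apply', lapMatrix_toLinearMap₂']

theorem dotProduct_lapMatrix_mulVec_le_card_mul (x : V → ℝ) :
    x ⬝ᵥ G.lapMatrix ℝ *ᵥ x ≤ Fintype.card V * (x ⬝ᵥ x) := by
  have hadj : (∑ i, ∑ j, if G.Adj i j then (x i - x j) ^ 2 else 0) ≤ ∑ i, ∑ j, (x i - x j) ^ 2 := by
    gcongr with i _ j _
    split_ifs
    exacts [le_rfl, sq_nonneg _]
  have hcomplete : ∑ i, ∑ j, (x i - x j) ^ 2 =
      2 * Fintype.card V * (x ⬝ᵥ x) - 2 * (∑ i, x i) ^ 2 := by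
    simp only [sub_sq, Finset.sum_add_distrib, Finset.sum_sub_distrib, Finset.sum_const,
      Finset.card_univ, nsmul_eq_mul, ← Finset.mul_sum, ← Finset.sum_mul, dotProduct, ← sq]
    ring
  rw [dotProduct_lapMatrix_mulVec]
  nlinarith [sq_nonneg (∑ i, x i)]

theorem lapμ_one_le_card [Nonempty V] : lapμ G 1 ≤ Fintype.card V := by
  rw [lapμ_eq_kthEig_lapMatrix]
  exact (G.isHermitian_lapMatrix ℝ).kthEig_one_le_of_forall_dotProduct_mulVec_le
    G.dotProduct_lapMatrix_mulVec_le_card_mul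

/-- The eigenvector of the star `K_{1, deg v}` centred at `v` for its largest Laplacian eigenvalue
`deg v + 1`. -/
def starTestVector (v : V) : V → ℝ :=
  fun a => if a = v then (G.degree v : ℝ) else if G.Adj v a then -1 else 0

theorem dotProduct_starTestVector_self (v : V) :
    G.starTestVector v ⬝ᵥ G.starTestVector v = G.degree v * (G.degree v + 1) := by
  have hsq : ∀ a, G.starTestVector v a * G.starTestVector v a =
      (if a = v then (G.degree v : ℝ) ^ 2 else 0) + if G.Adj v a then 1 else 0 := by
    intro a
    by_cases hav : a = v
    · subst hav; simp [starTestVector, sq]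
    · by_cases hadj : G.Adj v a <;> simp [starTestVector, hav, hadj]
  simp only [dotProduct, hsq, Finset.sum_add_distrib, Finset.sum_ite_eq', Finset.mem_univ,
    if_true, ← degree_eq_sum_if_adj]
  ring

theorem degree_add_one_mul_le_dotProduct_lapMatrix_mulVec_starTestVector (v : V) :
    (G.degree v + 1) * (G.starTestVector v ⬝ᵥ G.starTestVector v) ≤
      G.starTestVector v ⬝ᵥ G.lapMatrix ℝ *ᵥ G.starTestVector v := by
  set x := G.starTestVector v
  have hrow : ∀ j, (if G.Adj v j then (x v - x j) ^ 2 else 0) =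
      (if G.Adj v j then 1 else 0) * ((G.degree v : ℝ) + 1) ^ 2 := by
    intro j
    split_ifs with hadj
    · simp [x, starTestVector, hadj, hadj.ne', sub_eq_add_neg]
    · simp
  have hcol : ∀ i, (if G.Adj i v then (x i - x v) ^ 2 else 0) =
      (if G.Adj v i then 1 else 0) * ((G.degree v : ℝ) + 1) ^ 2 := by
    intro i
    simp only [G.adj_comm i v, ← neg_sub (x v) (x i), neg_sq, hrow]
  have hstar := Finset.sum_row_add_sum_col_le_sum_sum
    (F := fun i j => if G.Adj i j then (x i - x j) ^ 2 else 0)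
    (fun i j => by positivity) v (by simp)
  simp only [hrow, hcol, ← Finset.sum_mul, ← degree_eq_sum_if_adj] at hstar
  rw [dotProduct_starTestVector_self, dotProduct_lapMatrix_mulVec]
  linarith

theorem degree_add_one_le_lapμ_one {v : V} (hv : 0 < G.degree v) :
    (G.degree v : ℝ) + 1 ≤ lapμ G 1 := by
  have : Nonempty V := ⟨v⟩
  have hpos : 0 < G.starTestVector v ⬝ᵥ G.starTestVector v := by
    rw [dotProduct_starTestVector_self]
    positivity
  have hupper := (G.isHermitian_lapMatrix ℝ).dotProduct_mulVec_le_kthEig_one (G.starTestVector v)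
  rw [← lapμ_eq_kthEig_lapMatrix] at hupper
  exact le_of_mul_le_mul_right
    ((G.degree_add_one_mul_le_dotProduct_lapMatrix_mulVec_starTestVector v).trans hupper) hpos

theorem lapMatrix_mulVec_starTestVector_pos {v u w : V} (hvu : G.Adj v u) (huw : G.Adj u w)
    (hwv : w ≠ v) (hvw : ¬G.Adj v w) : 0 < (G.lapMatrix ℝ *ᵥ G.starTestVector v) w := by
  have hxw : G.starTestVector v w = 0 := by simp [starTestVector, hwv, hvw]
  have hnonpos : ∀ j ∈ G.neighborFinset w, G.starTestVector v j ≤ 0 := by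
    intro j hj
    have hjv : j ≠ v := by
      rintro rfl
      exact hvw ((G.mem_neighborFinset w j).1 hj).symm
    simp only [starTestVector, if_neg hjv]
    split_ifs <;> norm_num
  have hxu : G.starTestVector v u = -1 := by simp [starTestVector, hvu.ne', hvu]
  have hle : ∑ j ∈ G.neighborFinset w, G.starTestVector v j ≤ G.starTestVector v u := by
    simpa using Finset.sum_le_sum_of_subset_of_nonpos'
      (Finset.singleton_subset_iff.2 ((G.mem_neighborFinset w u).2 huw.symm))
      (fun j hj _ => hnonpos j hj)
  rw [lapMatrix_mulVec_apply, hxw, mul_zero, zero_sub]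
  linarith

theorem degree_add_one_lt_lapμ_one {v u w : V} (hv : 0 < G.degree v) (hvu : G.Adj v u)
    (huw : G.Adj u w) (hwv : w ≠ v) (hvw : ¬G.Adj v w) : (G.degree v : ℝ) + 1 < lapμ G 1 := by
  refine (G.degree_add_one_le_lapμ_one hv).lt_of_ne fun heq => ?_
  have heig := (G.isHermitian_lapMatrix ℝ).mulVec_eq_kthEig_one_smul_of_le
    (x := G.starTestVector v) (by
      rw [← lapμ_eq_kthEig_lapMatrix, ← heq]
      exact G.degree_add_one_mul_le_dotProduct_lapMatrix_mulVec_starTestVector v)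
  have hpos := G.lapMatrix_mulVec_starTestVector_pos hvu huw hwv hvw
  rw [heig, Pi.smul_apply, smul_eq_mul] at hpos
  simp [starTestVector, hwv, hvw] at hpos

theorem exists_adj_adj_not_adj_of_degree_add_one_lt_card (hG : G.Connected) (v : V)
    (hv : G.degree v + 1 < Fintype.card V) :
    ∃ u w, G.Adj v u ∧ G.Adj u w ∧ w ≠ v ∧ ¬G.Adj v w := by
  set N : Finset V := insert v (G.neighborFinset v)
  have hN : N.card < Fintype.card V :=
    (Finset.card_insert_le _ _).trans_lt (by rwa [card_neighborFinset_eq_degree])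
  obtain ⟨w₀, hw₀⟩ : ∃ w₀, w₀ ∉ N := by
    by_contra! hall
    exact hN.ne (Finset.eq_univ_iff_forall.2 hall ▸ Finset.card_univ)
  obtain ⟨p⟩ := hG.preconnected v w₀
  obtain ⟨d, -, hfst, hsnd⟩ := p.exists_boundary_dart (N : Set V) (by simp [N]) (by simpa using hw₀)
  simp only [Finset.coe_insert, Set.mem_insert_iff, Finset.mem_coe, mem_neighborFinset,
    not_or, N] at hfst hsnd
  obtain ⟨hsndv, hvsnd⟩ := hsnd
  rcases hfst with hfstv | hvfst
  · exact absurd (hfstv ▸ d.adj) hvsnd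
  · exact ⟨d.fst, d.snd, hvfst, d.adj, hsndv, hvsnd⟩

end SimpleGraph

theorem lapμ_one_eq_maxDegree_add_one_iff {V : Type} [Fintype V] [DecidableEq V]
    (G : SimpleGraph V) [DecidableRel G.Adj] (hG : G.Connected) (h : 1 ≤ G.maxDegree) :
    lapμ G 1 = (G.maxDegree : ℝ) + 1 ↔ G.maxDegree = Fintype.card V - 1 := by
  have : Nonempty V := hG.nonempty
  obtain ⟨v, hv⟩ := G.exists_maximal_degree_vertex
  have hdeg : 0 < G.degree v := hv ▸ h
  constructor
  · intro hμ
    by_contra hne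
    have hlt : G.degree v + 1 < Fintype.card V := by
      have := G.maxDegree_lt_card_verts
      omega
    obtain ⟨u, w, hvu, huw, hwv, hvw⟩ := G.exists_adj_adj_not_adj_of_degree_add_one_lt_card hG v hlt
    have := G.degree_add_one_lt_lapμ_one hdeg hvu huw hwv hvw
    rw [hμ, hv] at this
    exact lt_irrefl _ this
  · intro hΔ
    refine le_antisymm ?_ (hv ▸ G.degree_add_one_le_lapμ_one hdeg)
    have hcard : (Fintype.card V : ℝ) = G.maxDegree + 1 := by
      rw [hΔ, Nat.cast_sub Fintype.card_pos, Nat.cast_one, sub_add_cancel]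
    exact hcard ▸ G.lapμ_one_le_card
end

section
/- Let A and B be Hermitian matrices of order n and let 1 ≤ i, j ≤ n with i + j − 1 ≤ n. Then ρ_{i+j−1}(A+B) ≤ ρ_i(A) + ρ_j(B), where ρ_k(M) denotes the k-th largest eigenvalue of M. Moreover, equality holds if and only if there exists a nonzero vector x with (A+B)x = ρ_{i+j−1}(A+B)x, Ax = ρ_i(A)x, and Bx = ρ_j(B)x. -/
open Matrix

/-! The eigenvectors of `A` for `ρ_i(A), …, ρ_n(A)`, those of `B` for `ρ_j(B), …, ρ_n(B)` and those
of `A + B` for `ρ_1(A + B), …, ρ_{i+j-1}(A + B)` span subspaces whose dimensions add up to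
`2n + 1`, so the three subspaces share a vector `x ≠ 0`. Expanding `x` in each eigenbasis,
`ρ_{i+j-1}(A + B) ‖x‖² ≤ ⟪(A + B) x, x⟫ = ⟪A x, x⟫ + ⟪B x, x⟫ ≤ (ρ_i(A) + ρ_j(B)) ‖x‖²`.
If equality holds, both upper bounds are attained, and on these spans that happens only for
eigenvectors: `A x = ρ_i(A) x` and `B x = ρ_j(B) x`. Conversely, a common eigenvector forces the
eigenvalues to add up. -/

open Module Submodule RCLike
open scoped InnerProductSpace

namespace OrthonormalBasis
variable {ι 𝕜 E : Type*} [Fintype ι] [RCLike 𝕜] [NormedAddCommGroup E] [InnerProductSpace 𝕜 E]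
  (b : OrthonormalBasis ι 𝕜 E)

lemma repr_eq_zero_of_mem_span_image {s : Set ι} {x : E} (hx : x ∈ span 𝕜 (b '' s)) {k : ι}
    (hk : k ∉ s) : b.repr x k = 0 := by
  rw [← b.coe_toBasis, Basis.mem_span_image] at hx
  rw [← b.coe_toBasis_repr_apply]
  exact Finsupp.notMem_support_iff.mp fun h => hk (hx h)

lemma finrank_span_image (s : Finset ι) : finrank 𝕜 (span 𝕜 (b '' s)) = s.card := by
  rw [Set.image_eq_range, finrank_span_eq_card]
  · simp
  · exact (b.orthonormal.comp _ Subtype.val_injective).linearIndependent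

end OrthonormalBasis

lemma Submodule.inf_inf_ne_bot_of_finrank_add_gt {K M : Type*} [DivisionRing K] [AddCommGroup M]
    [Module K M] [FiniteDimensional K M] (U V W : Submodule K M)
    (h : 2 * finrank K M < finrank K U + finrank K V + finrank K W) : U ⊓ V ⊓ W ≠ ⊥ := by
  intro hbot
  have hUV := finrank_sup_add_finrank_inf_eq U V
  have hUVW := finrank_sup_add_finrank_inf_eq (U ⊓ V) W
  rw [hbot, finrank_bot] at hUVW
  have := finrank_le (U ⊔ V)
  have := finrank_le (U ⊓ V ⊔ W)
  omega

lemma LinearMap.eq_add_of_apply_eq_smul {K M : Type*} [DivisionRing K] [AddCommGroup M]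
    [Module K M] {T S : M →ₗ[K] M} {x : M} (hx : x ≠ 0) {a b c : K} (hTS : (T + S) x = c • x)
    (hT : T x = a • x) (hS : S x = b • x) : c = a + b :=
  smul_left_injective K hx (show c • x = (a + b) • x by rw [← hTS, add_apply, hT, hS, add_smul])

namespace LinearMap.IsSymmetric
variable {𝕜 E : Type*} [RCLike 𝕜] [NormedAddCommGroup E] [InnerProductSpace 𝕜 E]
  [FiniteDimensional 𝕜 E] {n : ℕ} {T : E →ₗ[𝕜] E} (hT : T.IsSymmetric) (hn : finrank 𝕜 E = n)

lemma re_inner_apply_self_eq_sum (x : E) :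
    re ⟪T x, x⟫_𝕜 =
      ∑ k, hT.eigenvalues hn k * ‖(hT.eigenvectorBasis hn).repr x k‖ ^ 2 := by
  rw [← (hT.eigenvectorBasis hn).repr.inner_map_map, PiLp.inner_apply, map_sum]
  refine Finset.sum_congr rfl fun k _ => ?_
  rw [RCLike.inner_apply, eigenvectorBasis_apply_self_apply, map_mul (starRingEnd 𝕜), conj_ofReal,
    mul_left_comm, mul_conj]
  norm_cast

lemma mul_sq_norm_sub_re_inner_apply_self (a : ℝ) (x : E) :
    a * ‖x‖ ^ 2 - re ⟪T x, x⟫_𝕜 =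
      ∑ k, (a - hT.eigenvalues hn k) * ‖(hT.eigenvectorBasis hn).repr x k‖ ^ 2 := by
  simp_rw [re_inner_apply_self_eq_sum hT hn, sub_mul, Finset.sum_sub_distrib, ← Finset.mul_sum,
    OrthonormalBasis.repr_apply_apply, OrthonormalBasis.sum_sq_norm_inner_right]

variable {hT hn} {i : Fin n} {x : E}

lemma sub_mul_sq_norm_repr_nonneg (hx : x ∈ span 𝕜 (hT.eigenvectorBasis hn '' Set.Ici i))
    (k : Fin n) :
    0 ≤ (hT.eigenvalues hn i - hT.eigenvalues hn k) * ‖(hT.eigenvectorBasis hn).repr x k‖ ^ 2 := by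
  by_cases hk : i ≤ k
  · exact mul_nonneg (sub_nonneg.mpr (hT.eigenvalues_antitone hn hk)) (sq_nonneg _)
  · simp [OrthonormalBasis.repr_eq_zero_of_mem_span_image _ hx hk]

lemma re_inner_apply_self_le (hx : x ∈ span 𝕜 (hT.eigenvectorBasis hn '' Set.Ici i)) :
    re ⟪T x, x⟫_𝕜 ≤ hT.eigenvalues hn i * ‖x‖ ^ 2 := by
  rw [← sub_nonneg, mul_sq_norm_sub_re_inner_apply_self hT hn]
  exact Finset.sum_nonneg fun k _ => sub_mul_sq_norm_repr_nonneg hx k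

lemma apply_eq_smul_of_re_inner_apply_self_eq
    (hx : x ∈ span 𝕜 (hT.eigenvectorBasis hn '' Set.Ici i))
    (h : re ⟪T x, x⟫_𝕜 = hT.eigenvalues hn i * ‖x‖ ^ 2) :
    T x = (hT.eigenvalues hn i : 𝕜) • x := by
  have hsum := mul_sq_norm_sub_re_inner_apply_self hT hn (hT.eigenvalues hn i) x
  rw [h, sub_self, eq_comm,
    Finset.sum_eq_zero_iff_of_nonneg fun k _ => sub_mul_sq_norm_repr_nonneg hx k] at hsum
  apply (hT.eigenvectorBasis hn).repr.injective
  ext k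
  rw [eigenvectorBasis_apply_self_apply, map_smul, PiLp.smul_apply, smul_eq_mul]
  obtain heig | hc := mul_eq_zero.mp (hsum k (Finset.mem_univ k))
  · rw [sub_eq_zero.mp heig]
  · simp [norm_eq_zero.mp (pow_eq_zero_iff two_ne_zero |>.mp hc)]

lemma le_re_inner_apply_self (hx : x ∈ span 𝕜 (hT.eigenvectorBasis hn '' Set.Iic i)) :
    hT.eigenvalues hn i * ‖x‖ ^ 2 ≤ re ⟪T x, x⟫_𝕜 := by
  rw [← sub_nonpos, mul_sq_norm_sub_re_inner_apply_self hT hn]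
  refine Finset.sum_nonpos fun k _ => ?_
  by_cases hk : k ≤ i
  · exact mul_nonpos_of_nonpos_of_nonneg (sub_nonpos.mpr (hT.eigenvalues_antitone hn hk))
      (sq_nonneg _)
  · simp [OrthonormalBasis.repr_eq_zero_of_mem_span_image _ hx hk]

-- Indices are 0-based here: `⟨i + j, hij⟩` stands for the 1-based `i + j - 1`.
variable (hT hn) {S : E →ₗ[𝕜] E} (hS : S.IsSymmetric) (i j : Fin n) (hij : (i : ℕ) + j < n)

lemma span_inf_span_inf_span_ne_bot :
    span 𝕜 (hT.eigenvectorBasis hn '' Set.Ici i) ⊓ span 𝕜 (hS.eigenvectorBasis hn '' Set.Ici j) ⊓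
      span 𝕜 ((hT.add hS).eigenvectorBasis hn '' Set.Iic ⟨i + j, hij⟩) ≠ ⊥ := by
  rw [← Finset.coe_Ici, ← Finset.coe_Ici, ← Finset.coe_Iic]
  apply inf_inf_ne_bot_of_finrank_add_gt
  simp only [OrthonormalBasis.finrank_span_image, Fin.card_Ici, Fin.card_Iic, hn]
  omega

theorem eigenvalues_add_le :
    (hT.add hS).eigenvalues hn ⟨i + j, hij⟩ ≤ hT.eigenvalues hn i + hS.eigenvalues hn j := by
  obtain ⟨x, ⟨⟨hxT, hxS⟩, hxTS⟩, hx0⟩ :=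
    exists_mem_ne_zero_of_ne_bot (span_inf_span_inf_span_ne_bot hT hn hS i j hij)
  refine le_of_mul_le_mul_right ?_ (by positivity : 0 < ‖x‖ ^ 2)
  calc _ ≤ re ⟪(T + S) x, x⟫_𝕜 := le_re_inner_apply_self hxTS
    _ = re ⟪T x, x⟫_𝕜 + re ⟪S x, x⟫_𝕜 := by rw [add_apply, inner_add_left, map_add]
    _ ≤ _ := by
      rw [add_mul]
      exact add_le_add (re_inner_apply_self_le hxT) (re_inner_apply_self_le hxS)

theorem eigenvalues_add_eq_add_iff :
    (hT.add hS).eigenvalues hn ⟨i + j, hij⟩ = hT.eigenvalues hn i + hS.eigenvalues hn j ↔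
      ∃ x, x ≠ 0 ∧ (T + S) x = ((hT.add hS).eigenvalues hn ⟨i + j, hij⟩ : 𝕜) • x ∧
        T x = (hT.eigenvalues hn i : 𝕜) • x ∧ S x = (hS.eigenvalues hn j : 𝕜) • x := by
  refine ⟨fun heq => ?_, fun ⟨x, hx0, hTSx, hTx, hSx⟩ => ?_⟩
  · obtain ⟨x, ⟨⟨hxT, hxS⟩, hxTS⟩, hx0⟩ :=
      exists_mem_ne_zero_of_ne_bot (span_inf_span_inf_span_ne_bot hT hn hS i j hij)
    have hTS := le_re_inner_apply_self hxTS
    rw [heq, add_apply, inner_add_left, map_add, add_mul] at hTS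
    have hTle := re_inner_apply_self_le hxT
    have hSle := re_inner_apply_self_le hxS
    have hTx := apply_eq_smul_of_re_inner_apply_self_eq hxT (by linarith)
    have hSx := apply_eq_smul_of_re_inner_apply_self_eq hxS (by linarith)
    refine ⟨x, hx0, ?_, hTx, hSx⟩
    rw [add_apply, hTx, hSx, ← add_smul, heq, ofReal_add]
  · exact_mod_cast LinearMap.eq_add_of_apply_eq_smul hx0 hTSx hTx hSx

end LinearMap.IsSymmetric

namespace Matrix.IsHermitian
variable {𝕜 m : Type} [RCLike 𝕜] [Fintype m] [DecidableEq m] {A B : Matrix m m 𝕜}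

lemma heigList_eq_ofFn_eigenvalues₀ (hA : A.IsHermitian) :
    heigList A = List.ofFn hA.eigenvalues₀ := by
  rw [heigList, dif_pos hA, ← hA.sort_roots_charpoly_eq_eigenvalues₀,
    hA.roots_charpoly_eq_eigenvalues, Multiset.map_map]
  congr 2
  ext
  simp

lemma kthEig_add_one (hA : A.IsHermitian) {k : ℕ} (hk : k < Fintype.card m) :
    kthEig A (k + 1) = hA.eigenvalues₀ ⟨k, hk⟩ := by
  rw [kthEig, heigList_eq_ofFn_eigenvalues₀ hA, Nat.add_sub_cancel,
    List.getD_eq_getElem _ _ (by simpa using hk), List.getElem_ofFn]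

lemma eigenvalues₀_add (hA : A.IsHermitian) (hB : B.IsHermitian) :
    (hA.add hB).eigenvalues₀ = ((isSymmetric_toEuclideanLin_iff.mpr hA).add
      (isSymmetric_toEuclideanLin_iff.mpr hB)).eigenvalues finrank_euclideanSpace := by
  rw [eigenvalues₀]
  congr 1
  exact map_add _ _ _

variable (hA : A.IsHermitian) (hB : B.IsHermitian) (i j : Fin (Fintype.card m))
  (hij : (i : ℕ) + j < Fintype.card m)

theorem eigenvalues₀_add_le :
    (hA.add hB).eigenvalues₀ ⟨i + j, hij⟩ ≤ hA.eigenvalues₀ i + hB.eigenvalues₀ j := by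
  rw [eigenvalues₀_add hA hB]
  exact LinearMap.IsSymmetric.eigenvalues_add_le _ _ _ i j hij

theorem eigenvalues₀_add_eq_add_iff :
    (hA.add hB).eigenvalues₀ ⟨i + j, hij⟩ = hA.eigenvalues₀ i + hB.eigenvalues₀ j ↔
      ∃ x : m → 𝕜, x ≠ 0 ∧ (A + B) *ᵥ x = ((hA.add hB).eigenvalues₀ ⟨i + j, hij⟩ : 𝕜) • x ∧
        A *ᵥ x = (hA.eigenvalues₀ i : 𝕜) • x ∧ B *ᵥ x = (hB.eigenvalues₀ j : 𝕜) • x := by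
  rw [eigenvalues₀_add hA hB]
  refine (LinearMap.IsSymmetric.eigenvalues_add_eq_add_iff _ _ _ i j hij).trans ?_
  refine (WithLp.equiv 2 (m → 𝕜)).exists_congr_left.trans (exists_congr fun x => ?_)
  simp only [WithLp.equiv_symm_apply, LinearMap.add_apply, toLpLin_apply, ← WithLp.toLp_add,
    ← add_mulVec, ← WithLp.toLp_smul, (WithLp.toLp_injective 2).eq_iff, ne_eq]
  -- both sides now agree up to unfolding `eigenvalues₀` and `WithLp.ofLp 0`
  rfl

end Matrix.IsHermitian

theorem weyl_inequality_with_equality_general {n : ℕ} (A B : Matrix (Fin n) (Fin n) ℂ)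
    (hA : A.IsHermitian) (hB : B.IsHermitian) (i j : ℕ)
    (hi : 1 ≤ i) (hj : 1 ≤ j) (hij : i + j - 1 ≤ n) :
    kthEig (A + B) (i + j - 1) ≤ kthEig A i + kthEig B j ∧
    (kthEig (A + B) (i + j - 1) = kthEig A i + kthEig B j ↔
      ∃ x : Fin n → ℂ, x ≠ 0 ∧
        (A + B).mulVec x = (kthEig (A + B) (i + j - 1) : ℂ) • x ∧
        A.mulVec x = (kthEig A i : ℂ) • x ∧
        B.mulVec x = (kthEig B j : ℂ) • x) := by
  obtain ⟨i, rfl⟩ : ∃ i', i = i' + 1 := ⟨i - 1, by omega⟩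
  obtain ⟨j, rfl⟩ : ∃ j', j = j' + 1 := ⟨j - 1, by omega⟩
  have hij' : i + j < Fintype.card (Fin n) := by rw [Fintype.card_fin]; omega
  rw [show i + 1 + (j + 1) - 1 = i + j + 1 by omega, (hA.add hB).kthEig_add_one hij',
    hA.kthEig_add_one (by omega), hB.kthEig_add_one (by omega)]
  exact ⟨hA.eigenvalues₀_add_le hB ⟨i, _⟩ ⟨j, _⟩ hij',
    hA.eigenvalues₀_add_eq_add_iff hB ⟨i, _⟩ ⟨j, _⟩ hij'⟩

theorem weyl_inequality_with_equality {n : ℕ} (A B : Matrix (Fin n) (Fin n) ℂ)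
    (hA : A.IsHermitian) (hB : B.IsHermitian) (i j : ℕ)
    (hi : 1 ≤ i) (hi' : i ≤ n) (hj : 1 ≤ j) (hj' : j ≤ n) (hij : i + j - 1 ≤ n) :
    kthEig (A + B) (i + j - 1) ≤ kthEig A i + kthEig B j ∧
    (kthEig (A + B) (i + j - 1) = kthEig A i + kthEig B j ↔
      ∃ x : Fin n → ℂ, x ≠ 0 ∧
        (A + B).mulVec x = (kthEig (A + B) (i + j - 1) : ℂ) • x ∧
        A.mulVec x = (kthEig A i : ℂ) • x ∧
        B.mulVec x = (kthEig B j : ℂ) • x) :=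
  weyl_inequality_with_equality_general A B hA hB i j hi hj hij
end

section
/- Let n and t be integers with 1 ≤ t ≤ n−3, and let P_{n,t}^{++} be the graph obtained from the path P_{n−1} = v₁…v_{n−1} by adding a new vertex u together with the two edges u v_t and u v_{t+2}. Then the second largest Laplacian eigenvalue satisfies μ₂(P_{n,t}^{++}) < 4. -/
open Matrix

/-- The graph `P_{n,t}^{++}`: a path `v₁ … v_{n-1}` (vertices `0, …, n-2`) together with an
extra vertex `u` (vertex `n-1`) adjacent exactly to `v_t` (vertex `t-1`) and `v_{t+2}`
(vertex `t+1`). -/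
def Ppp (n t : ℕ) : SimpleGraph (Fin n) :=
  SimpleGraph.fromRel (fun i j =>
    (i.val + 1 = j.val ∧ j.val ≤ n - 2) ∨
    (i.val = n - 1 ∧ (j.val = t - 1 ∨ j.val = t + 1)))

/-!
Suppose `μ₂ ≥ 4`. The plane spanned by eigenvectors for `μ₁` and `μ₂` meets the hyperplane
`x(v_t) + x(v_{t+2}) = x(v_{t+1}) + x(u)` in a nonzero vector `x`, and `xᵀ L x ≥ 4 ‖x‖²`.
On that hyperplane, however, `4 ‖x‖² - xᵀ L x` is a sum of squares: expanding
`(a - b)² = 2a² + 2b² - (a + b)²` along the path, the constraint turns the contribution of the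
4-cycle `v_t v_{t+1} v_{t+2} u` into `2 x(v_{t+1})² + 2 x(u)² + 2 (x(v_{t+1}) + x(u))²`, and the
sum of squares vanishes only at `x = 0`.
-/

open Finset

namespace Matrix.IsHermitian

variable {m : Type} [Fintype m] [DecidableEq m] {A : Matrix m m ℝ} (hA : A.IsHermitian)
include hA

theorem heigList_eq_ofFn : heigList A = List.ofFn hA.eigenvalues₀ := by
  have hroots := congrArg (Multiset.map RCLike.re) hA.roots_charpoly_eq_eigenvalues
  rw [Multiset.map_map] at hroots
  rw [heigList, dif_pos hA, ← hA.sort_roots_charpoly_eq_eigenvalues₀, hroots]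
  simp

theorem kthEig_eq_eigenvalues₀ {k : ℕ} (hk : k < Fintype.card m) :
    kthEig A (k + 1) = hA.eigenvalues₀ ⟨k, hk⟩ := by
  simp [kthEig, hA.heigList_eq_ofFn, hk]

theorem dotProduct_eigenvectorBasis (i j : m) :
    ⇑(hA.eigenvectorBasis i) ⬝ᵥ ⇑(hA.eigenvectorBasis j) = if i = j then 1 else 0 := by
  rw [← orthonormal_iff_ite.mp hA.eigenvectorBasis.orthonormal i j,
    EuclideanSpace.inner_eq_star_dotProduct, star_trivial, dotProduct_comm]

theorem exists_ne_zero_le_dotProduct_mulVec {i j : m} (hij : i ≠ j) {c : ℝ}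
    (hi : c ≤ hA.eigenvalues i) (hj : c ≤ hA.eigenvalues j) (φ : (m → ℝ) →ₗ[ℝ] ℝ) :
    ∃ x ≠ 0, φ x = 0 ∧ c * (x ⬝ᵥ x) ≤ x ⬝ᵥ A *ᵥ x := by
  set v := fun k => ⇑(hA.eigenvectorBasis k)
  obtain ⟨a, b, hab, hφ⟩ : ∃ a b : ℝ, a ^ 2 + b ^ 2 ≠ 0 ∧ a * φ (v i) + b * φ (v j) = 0 := by
    by_cases h : φ (v i) = 0 ∧ φ (v j) = 0
    · exact ⟨1, 0, by norm_num, by simp [h.1, h.2]⟩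
    · refine ⟨φ (v j), -φ (v i), fun h0 => h ?_, by ring⟩
      constructor <;> nlinarith [sq_nonneg (φ (v i)), sq_nonneg (φ (v j))]
  have hdot (a b a' b' : ℝ) :
      (a • v i + b • v j) ⬝ᵥ (a' • v i + b' • v j) = a * a' + b * b' := by
    simp [v, hA.dotProduct_eigenvectorBasis, hij, hij.symm, mul_comm]
  have hmulVec : A *ᵥ (a • v i + b • v j) =
      (a * hA.eigenvalues i) • v i + (b * hA.eigenvalues j) • v j := by
    simp only [mulVec_add, mulVec_smul, v, hA.mulVec_eigenvectorBasis, smul_smul]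
  refine ⟨a • v i + b • v j, fun h0 => hab ?_, by simpa using hφ, ?_⟩
  · simpa [sq, h0] using (hdot a b a b).symm
  · rw [hmulVec, hdot, hdot]
    nlinarith [mul_le_mul_of_nonneg_left hi (mul_self_nonneg a),
      mul_le_mul_of_nonneg_left hj (mul_self_nonneg b)]

theorem kthEig_two_lt_of_forall_ker (hm : 2 ≤ Fintype.card m) {c : ℝ} (φ : (m → ℝ) →ₗ[ℝ] ℝ)
    (h : ∀ x ≠ 0, φ x = 0 → x ⬝ᵥ A *ᵥ x < c * (x ⬝ᵥ x)) : kthEig A 2 < c := by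
  by_contra! hc
  set e := Fintype.equivOfCardEq (Fintype.card_fin (Fintype.card m))
  have heig (k : Fin (Fintype.card m)) : hA.eigenvalues (e k) = hA.eigenvalues₀ k := by
    simp [eigenvalues, e]
  have h1 : c ≤ hA.eigenvalues₀ ⟨1, hm⟩ := hA.kthEig_eq_eigenvalues₀ hm ▸ hc
  have h0 : c ≤ hA.eigenvalues₀ ⟨0, by omega⟩ :=
    h1.trans (hA.eigenvalues₀_antitone (Fin.mk_le_mk.mpr zero_le_one))
  obtain ⟨x, hx, hφ, hle⟩ := hA.exists_ne_zero_le_dotProduct_mulVec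
    (e.injective.ne (Fin.ne_of_val_ne zero_ne_one)) ((heig _).symm ▸ h0) ((heig _).symm ▸ h1) φ
  exact (h x hx hφ).not_ge hle

end Matrix.IsHermitian

theorem isHermitian_lapMat {V : Type} [Fintype V] [DecidableEq V] (G : SimpleGraph V) :
    (lapMat G).IsHermitian :=
  let _ := Classical.decRel G.Adj
  (SimpleGraph.posSemidef_lapMatrix ℝ G).isHermitian

theorem dotProduct_lapMat_fromRel {V : Type} [Fintype V] [DecidableEq V] (r : V → V → Prop)
    [DecidableRel r] (hr : ∀ i j, r i j → ¬r j i) (x : V → ℝ) :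
    x ⬝ᵥ lapMat (SimpleGraph.fromRel r) *ᵥ x = ∑ i, ∑ j, if r i j then (x i - x j) ^ 2 else 0 := by
  let _ := Classical.decRel (SimpleGraph.fromRel r).Adj
  have hsplit (i j : V) : (if (SimpleGraph.fromRel r).Adj i j then (x i - x j) ^ 2 else 0) =
      (if r i j then (x i - x j) ^ 2 else 0) + if r j i then (x j - x i) ^ 2 else 0 := by
    by_cases hij : i = j
    · simp [hij]
    by_cases h : r i j
    · simp [hij, h, hr i j h]
    by_cases h' : r j i
    · simp [hij, h, h', sub_sq_comm]
    · simp [hij, h, h']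
  rw [← toLinearMap₂'_apply', lapMat, SimpleGraph.lapMatrix_toLinearMap₂']
  simp only [hsplit, sum_add_distrib]
  rw [sum_comm (f := fun i j => if r j i then (x j - x i) ^ 2 else 0)]
  ring

theorem sum_range_sub_sq_eq (Z : ℕ → ℝ) (k : ℕ) :
    ∑ i ∈ range k, (Z i - Z (i + 1)) ^ 2 = 4 * ∑ i ∈ range k, Z i ^ 2 - 2 * Z 0 ^ 2 +
      2 * Z k ^ 2 - ∑ i ∈ range k, (Z i + Z (i + 1)) ^ 2 := by
  induction k with
  | zero => simp
  | succ k ih =>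
    simp only [sum_range_succ, ih]
    ring

namespace Ppp

/-- The Laplacian quadratic form of `Ppp n t`, for a vector given by its values on `ℕ`. -/
def energy (n t : ℕ) (X : ℕ → ℝ) : ℝ :=
  ∑ i ∈ range (n - 2), (X i - X (i + 1)) ^ 2 + (X (n - 1) - X (t - 1)) ^ 2 +
    (X (n - 1) - X (t + 1)) ^ 2

theorem sum_range_sum_range_ite {n t : ℕ} (ht : t + 3 ≤ n) (g : ℕ → ℕ → ℝ) :
    ∑ a ∈ range n, ∑ b ∈ range n,
      (if (a + 1 = b ∧ b ≤ n - 2) ∨ (a = n - 1 ∧ (b = t - 1 ∨ b = t + 1)) then g a b else 0) =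
    ∑ i ∈ range (n - 2), g i (i + 1) + g (n - 1) (t - 1) + g (n - 1) (t + 1) := by
  obtain ⟨p, rfl⟩ : ∃ p, n = p + 2 := ⟨n - 2, by omega⟩
  simp only [show p + 2 - 2 = p by omega, show p + 2 - 1 = p + 1 by omega]
  have hpath (a : ℕ) (ha : a < p + 1) : ∑ b ∈ range (p + 2),
      (if (a + 1 = b ∧ b ≤ p) ∨ (a = p + 1 ∧ (b = t - 1 ∨ b = t + 1)) then g a b else 0) =
      if a < p then g a (a + 1) else 0 := by
    have hcond (b : ℕ) : (a + 1 = b ∧ b ≤ p) ∨ (a = p + 1 ∧ (b = t - 1 ∨ b = t + 1)) ↔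
        a + 1 = b ∧ a < p := by omega
    simp only [hcond, ite_and, sum_ite_eq, mem_range]
    simp [show a + 1 < p + 2 by omega]
  have hpendant : ∑ b ∈ range (p + 2),
      (if (p + 1 + 1 = b ∧ b ≤ p) ∨ (p + 1 = p + 1 ∧ (b = t - 1 ∨ b = t + 1)) then g (p + 1) b
        else 0) = g (p + 1) (t - 1) + g (p + 1) (t + 1) := by
    have hfilter : (range (p + 2)).filter (fun b =>
        (p + 1 + 1 = b ∧ b ≤ p) ∨ (p + 1 = p + 1 ∧ (b = t - 1 ∨ b = t + 1))) = {t - 1, t + 1} := by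
      ext b
      simp only [mem_filter, mem_range, mem_insert, mem_singleton, true_and]
      omega
    rw [← sum_filter, hfilter, sum_pair (by omega)]
  rw [sum_range_succ, hpendant, sum_congr rfl fun a ha => hpath a (mem_range.mp ha),
    sum_range_succ, if_neg (lt_irrefl p), add_zero, ← add_assoc]
  congr 2
  exact sum_congr rfl fun a ha => if_pos (mem_range.mp ha)

theorem dotProduct_lapMat {n t : ℕ} (ht : t + 3 ≤ n) (X : ℕ → ℝ) :
    (fun i : Fin n => X i) ⬝ᵥ lapMat (Ppp n t) *ᵥ (fun i => X i) = energy n t X := by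
  rw [Ppp, dotProduct_lapMat_fromRel _ (fun i j => by omega), energy,
    ← sum_range_sum_range_ite ht fun a b => (X a - X b) ^ 2, ← Fin.sum_univ_eq_sum_range]
  refine sum_congr rfl fun i _ => ?_
  rw [← Fin.sum_univ_eq_sum_range]

/- In the coordinates `t = s + 1`, `n = p + 2`, the 4-cycle is `s, s + 1, s + 2, p + 1` and the
path ends at `p`. -/
theorem four_mul_sum_sq_sub_energy {s p : ℕ} (hs : s + 2 ≤ p) (X : ℕ → ℝ)
    (hcycle : X s + X (s + 2) = X (s + 1) + X (p + 1)) :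
    4 * ∑ i ∈ range (p + 2), X i ^ 2 - energy (p + 2) (s + 1) X =
      2 * X 0 ^ 2 + 2 * X p ^ 2 + 2 * X (s + 1) ^ 2 + 2 * X (p + 1) ^ 2 +
        2 * (X (s + 1) + X (p + 1)) ^ 2 +
        ∑ i ∈ ((range p).erase s).erase (s + 1), (X i + X (i + 1)) ^ 2 := by
  have hpairs : ∑ i ∈ range p, (X i + X (i + 1)) ^ 2 =
      (X s + X (s + 1)) ^ 2 + (X (s + 1) + X (s + 2)) ^ 2 +
        ∑ i ∈ ((range p).erase s).erase (s + 1), (X i + X (i + 1)) ^ 2 := by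
    rw [← add_sum_erase _ _ (mem_range.mpr (by omega : s < p)),
      ← add_sum_erase _ _ (mem_erase.mpr ⟨by omega, mem_range.mpr (by omega : s + 1 < p)⟩)]
    ring
  simp only [energy, Nat.add_sub_cancel, show p + 2 - 1 = p + 1 from rfl,
    show s + 1 + 1 = s + 2 from rfl]
  rw [sum_range_succ, sum_range_succ, sum_range_sub_sq_eq, hpairs]
  linear_combination 2 * (X (s + 1) + X (p + 1)) * hcycle

theorem eq_zero_of_add_succ_eq_zero {s p : ℕ} (X : ℕ → ℝ)
    (hcycle : X s + X (s + 2) = X (s + 1) + X (p + 1)) (h0 : X 0 = 0) (hs : X (s + 1) = 0)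
    (hp : X (p + 1) = 0)
    (hpairs : ∀ i ∈ ((range p).erase s).erase (s + 1), X i + X (i + 1) = 0) :
    ∀ i < p + 2, X i = 0 := by
  have hpath : ∀ i ≤ p, X i = 0 := by
    intro i
    induction i using Nat.strong_induction_on with
    | _ i ih =>
      intro hi
      match i with
      | 0 => exact h0
      | j + 1 =>
        by_cases hj : j = s
        · exact hj ▸ hs
        by_cases hj' : j = s + 1
        · subst hj'
          linarith [ih s (by omega) (by omega)]
        · linarith [ih j (by omega) (by omega),
            hpairs j (mem_erase.mpr ⟨hj', mem_erase.mpr ⟨hj, mem_range.mpr (by omega)⟩⟩)]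
  intro i hi
  rcases Nat.lt_succ_iff_lt_or_eq.mp hi with hi | rfl
  · exact hpath i (by omega)
  · exact hp

theorem energy_lt_four_mul_sum_sq {n t : ℕ} (ht : 1 ≤ t) (ht' : t + 3 ≤ n) (X : ℕ → ℝ)
    (hcycle : X (t - 1) + X (t + 1) = X t + X (n - 1)) (hX : ∃ i < n, X i ≠ 0) :
    energy n t X < 4 * ∑ i ∈ range n, X i ^ 2 := by
  obtain ⟨s, rfl⟩ : ∃ s, t = s + 1 := ⟨t - 1, by omega⟩
  obtain ⟨p, rfl⟩ : ∃ p, n = p + 2 := ⟨n - 2, by omega⟩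
  simp only [Nat.add_sub_cancel, show p + 2 - 1 = p + 1 from rfl,
    show s + 1 + 1 = s + 2 from rfl] at hcycle
  rw [← sub_pos, four_mul_sum_sq_sub_energy (by omega) X hcycle]
  set R := ∑ i ∈ ((range p).erase s).erase (s + 1), (X i + X (i + 1)) ^ 2
  have hR : 0 ≤ R := sum_nonneg fun i _ => sq_nonneg _
  have hsq {a : ℝ} (h : a ^ 2 = 0) : a = 0 := pow_eq_zero_iff two_ne_zero |>.mp h
  obtain ⟨i, hi, hXi⟩ := hX
  refine (by positivity : (0 : ℝ) ≤ _).lt_of_ne fun hzero => hXi ?_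
  have := sq_nonneg (X 0); have := sq_nonneg (X p); have := sq_nonneg (X (s + 1))
  have := sq_nonneg (X (p + 1)); have := sq_nonneg (X (s + 1) + X (p + 1))
  refine eq_zero_of_add_succ_eq_zero X hcycle (hsq (by linarith)) (hsq (by linarith))
    (hsq (by linarith)) (fun j hj => hsq ?_) i hi
  exact (sum_eq_zero_iff_of_nonneg fun i _ => sq_nonneg (X i + X (i + 1))).mp
    (show R = 0 by linarith) j hj

end Ppp

theorem Ppp_mu_two_lt_four (n t : ℕ) (ht : 1 ≤ t) (ht' : t + 3 ≤ n) :
    lapμ (Ppp n t) 2 < 4 := by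
  let φ : (Fin n → ℝ) →ₗ[ℝ] ℝ :=
    LinearMap.proj ⟨t - 1, by omega⟩ + LinearMap.proj ⟨t + 1, by omega⟩ -
      LinearMap.proj ⟨t, by omega⟩ - LinearMap.proj ⟨n - 1, by omega⟩
  refine (isHermitian_lapMat (Ppp n t)).kthEig_two_lt_of_forall_ker
    (by rw [Fintype.card_fin]; omega) φ fun x hx hφ => ?_
  obtain ⟨X, rfl⟩ : ∃ X : ℕ → ℝ, x = fun i : Fin n => X i :=
    ⟨fun k => if h : k < n then x ⟨k, h⟩ else 0, funext fun i => by simp⟩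
  have hnorm : (fun i : Fin n => X i) ⬝ᵥ (fun i => X i) = ∑ i ∈ range n, X i ^ 2 := by
    simp only [dotProduct, ← sq]
    exact Fin.sum_univ_eq_sum_range (fun i => X i ^ 2) n
  have hcycle : X (t - 1) + X (t + 1) = X t + X (n - 1) := by
    simp only [φ, LinearMap.sub_apply, LinearMap.add_apply, LinearMap.coe_proj, Function.eval]
      at hφ
    linarith
  rw [Ppp.dotProduct_lapMat ht', hnorm]
  refine Ppp.energy_lt_four_mul_sum_sq ht ht' X hcycle ?_
  by_contra! h
  exact hx (funext fun i => h i i.isLt)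
end
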